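/- If an m×n matrix M' over Σ is fair w.r.t. γ and d(M,M') < c̃, then no new type is created: every type of M' is a type of M, i.e., types(M') ⊆ types(M). -/

import Mathlib

variable {m n c : ℕ} {A : Type*} [Fintype A] [DecidableEq A]

/-- The set of distinct row types of a matrix. -/
def types (M : Fin m → Fin n → A) : Finset (Fin n → A) :=
  Finset.univ.image (fun i => M i)

/-- The number of distinct rows of a matrix. -/
def dr (M : Fin m → Fin n → A) : ℕ := (types M).card

/-- The cluster of a type `τ` in `M`: the set of rows whose type is `τ`. -/
def cluster (M : Fin m → Fin n → A) (τ : Fin n → A) : Finset (Fin m) :=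
  Finset.univ.filter (fun i => M i = τ)

/-- The edit cost between two matrices: the number of positions where they differ. -/
def editCost (M M' : Fin m → Fin n → A) : ℕ :=
  ((Finset.univ : Finset (Fin m × Fin n)).filter (fun p => M p.1 p.2 ≠ M' p.1 p.2)).card

/-- The number of occurrences of color `z` in the coloring `γ`. -/
def colorCount (γ : Fin m → Fin c) (z : Fin c) : ℕ :=
  (Finset.univ.filter (fun i => γ i = z)).card

/-- A set of rows is fair w.r.t. `γ` if it witnesses the same color distribution as `γ`. -/
def fairSet (γ : Fin m → Fin c) (S : Finset (Fin m)) : Prop :=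
  ∀ z : Fin c, m * (S.filter (fun i => γ i = z)).card = colorCount γ z * S.card

/-- A matrix is fair if the cluster of each of its types is fair. -/
def fairMatrix (γ : Fin m → Fin c) (M' : Fin m → Fin n → A) : Prop :=
  ∀ τ ∈ types M', fairSet γ (cluster M' τ)

/-- The fairlet size `c̃ = m / gcd(|γ|_1, …, |γ|_c)`. -/
def fairletSize (γ : Fin m → Fin c) : ℕ :=
  m / Finset.univ.gcd (colorCount γ)

/-!
Fairness of a set `S` of rows gives `m ∣ |γ|_z · |S|` for every color `z`, hence
`m ∣ gcd_z |γ|_z · |S|`, i.e. `c̃ ∣ |S|`: every nonempty fair set has at least `c̃` rows. The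
cluster in `M'` of a type that does not occur in `M` consists of rows each carrying at least one
edit, so it has at most `d(M, M') < c̃` rows, and it is nonempty and fair.
-/

theorem sum_colorCount (γ : Fin m → Fin c) : ∑ z, colorCount γ z = m := by
  simpa [colorCount] using
    (Finset.card_eq_sum_card_fiberwise (f := γ) (s := Finset.univ) (t := Finset.univ)
      fun _ _ => Finset.mem_univ _).symm

theorem gcd_colorCount_dvd (γ : Fin m → Fin c) : Finset.univ.gcd (colorCount γ) ∣ m := by
  conv_rhs => rw [← sum_colorCount γ]
  exact Finset.dvd_sum fun _ hz => Finset.gcd_dvd hz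

section Fairness

variable {γ : Fin m → Fin c} {S : Finset (Fin m)}

theorem fairSet.dvd_gcd_colorCount_mul_card (hS : fairSet γ S) :
    m ∣ Finset.univ.gcd (colorCount γ) * S.card := by
  have hgcd : (Finset.univ.gcd fun z => colorCount γ z * S.card) =
      Finset.univ.gcd (colorCount γ) * S.card := by
    simpa using Finset.gcd_mul_right (s := Finset.univ) (f := colorCount γ) (a := S.card)
  exact hgcd ▸ Finset.dvd_gcd fun z _ => ⟨_, (hS z).symm⟩

theorem fairSet.fairletSize_dvd_card (hS : fairSet γ S) :
    fairletSize γ ∣ S.card := by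
  rcases eq_or_ne (Finset.univ.gcd (colorCount γ)) 0 with hg | hg
  · obtain rfl : m = 0 := Nat.eq_zero_of_zero_dvd (hg ▸ gcd_colorCount_dvd γ)
    simp [Finset.eq_empty_of_isEmpty S]
  · exact (Nat.div_dvd_iff_dvd_mul (gcd_colorCount_dvd γ) (Nat.pos_of_ne_zero hg)).mpr
      hS.dvd_gcd_colorCount_mul_card

end Fairness

omit [Fintype A] in
theorem card_filter_row_ne_le_editCost (M M' : Fin m → Fin n → A) :
    (Finset.univ.filter fun i => M i ≠ M' i).card ≤ editCost M M' := by
  refine le_trans (Finset.card_le_card ?_) (Finset.card_image_le (f := Prod.fst))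
  intro i hi
  obtain ⟨j, hj⟩ := Function.ne_iff.mp (Finset.mem_filter.mp hi).2
  exact Finset.mem_image.mpr ⟨(i, j), by simpa [editCost] using hj, rfl⟩

omit [Fintype A] in
theorem cluster_nonempty {M : Fin m → Fin n → A} {τ : Fin n → A} (hτ : τ ∈ types M) :
    (cluster M τ).Nonempty := by
  obtain ⟨i, -, hi⟩ := Finset.mem_image.mp hτ
  exact ⟨i, by simpa [cluster] using hi⟩

omit [Fintype A] in
theorem card_cluster_le_editCost {M M' : Fin m → Fin n → A} {τ : Fin n → A}
    (hτ : τ ∉ types M) : (cluster M' τ).card ≤ editCost M M' := by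
  refine le_trans (Finset.card_le_card fun i hi => ?_) (card_filter_row_ne_le_editCost M M')
  have hMi : M' i = τ := (Finset.mem_filter.mp hi).2
  exact Finset.mem_filter.mpr ⟨Finset.mem_univ i, fun he =>
    hτ (Finset.mem_image.mpr ⟨i, Finset.mem_univ i, he.trans hMi⟩)⟩

theorem no_new_type_of_editCost_lt_fairletSize_general
    (γ : Fin m → Fin c)
    (M M' : Fin m → Fin n → A) (h : fairMatrix γ M')
    (hk : editCost M M' < fairletSize γ) :
    types M' ⊆ types M := by
  intro τ hτ
  by_contra hτM
  have hsize : fairletSize γ ≤ (cluster M' τ).card :=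
    Nat.le_of_dvd (cluster_nonempty hτ).card_pos (h τ hτ).fairletSize_dvd_card
  exact absurd (hsize.trans (card_cluster_le_editCost hτM)) hk.not_ge

/-- A fair matrix obtained with fewer than `c̃` edits creates no new type. -/
theorem no_new_type_of_editCost_lt_fairletSize (hm : 0 < m) (hn : 0 < n)
    (γ : Fin m → Fin c) (hγ : Function.Surjective γ)
    (M M' : Fin m → Fin n → A) (h : fairMatrix γ M')
    (hk : editCost M M' < fairletSize γ) :
    types M' ⊆ types M :=
  no_new_type_of_editCost_lt_fairletSize_general γ M M' h hk
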